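/- arXiv:quant-ph/0206103 — 2 statements merged into one kernel-verified Lean document; each statement's English description precedes it below -/
import Mathlib

section
/- Suppose abcd ≠ 0. Then the mean of the limit distribution is E(Z^φ) = ∫_{−|a|}^{|a|} x·f_{α,β}(x) dx = −(1 − √(1−|a|²))·λ_{α,β}. -/
open scoped BigOperators

noncomputable section

open Real Set

-- derivative of x ↦ arcsin(x*s/(r*√(1-x²)))
lemma deriv3 {r x : ℝ} (hr0 : 0 < r) (hr1 : r < 1) (hx : x ∈ Ioo (-r) r) :
    HasDerivAt (fun x => Real.arcsin (x * Real.sqrt (1-r^2) / (r * Real.sqrt (1-x^2))))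
      (Real.sqrt (1-r^2) / ((1-x^2) * Real.sqrt (r^2-x^2))) x := by
  obtain ⟨h1, h2⟩ := hx
  have hx2 : x^2 < r^2 := by nlinarith [abs_lt.2 ⟨h1, h2⟩, sq_abs x]
  have hr2 : r^2 < 1 := by nlinarith
  have hQpos : 0 < 1 - x^2 := by nlinarith
  have hPpos : 0 < r^2 - x^2 := by linarith
  have hs : 0 < 1 - r^2 := by linarith
  set s := Real.sqrt (1-r^2) with hs_def
  set Q := Real.sqrt (1-x^2) with hQ_def
  set P := Real.sqrt (r^2-x^2) with hP_def
  have hsp : 0 < s := Real.sqrt_pos.2 hs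
  have hQp : 0 < Q := Real.sqrt_pos.2 hQpos
  have hPp : 0 < P := Real.sqrt_pos.2 hPpos
  have hs2 : s^2 = 1 - r^2 := Real.sq_sqrt hs.le
  have hQ2 : Q^2 = 1 - x^2 := Real.sq_sqrt hQpos.le
  have hP2 : P^2 = r^2 - x^2 := Real.sq_sqrt hPpos.le
  -- inner function derivative
  have hQd : HasDerivAt (fun x => Real.sqrt (1 - x^2)) (-x / Q) x := by
    have := (Real.hasDerivAt_sqrt (x := 1 - x^2) hQpos.ne').comp x
      (((hasDerivAt_id x).pow 2).const_sub 1)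
    refine HasDerivAt.congr_deriv this (Eq.symm ?_)
    field_simp
    rw [← hQ_def]; simp only [id]
    ring
  have hinner : HasDerivAt (fun x => x * s / (r * Real.sqrt (1-x^2)))
      ((s * (r*Q) - x*s*(r*(-x/Q)))/(r*Q)^2) x := by
    have := ((hasDerivAt_id x).mul_const s).div ((hQd.const_mul r)) (by positivity)
    refine HasDerivAt.congr_deriv this (Eq.symm ?_)
    simp [← hQ_def]
  -- argument in (-1,1)
  have harg : (x * s / (r * Q))^2 < 1 := by
    rw [div_pow, div_lt_one (by positivity)]
    rw [mul_pow, mul_pow, hs2, hQ2]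
    nlinarith
  have h₁ : x * s / (r * Q) ≠ -1 := by
    intro h; rw [h] at harg; norm_num at harg
  have h₂ : x * s / (r * Q) ≠ 1 := by
    intro h; rw [h] at harg; norm_num at harg
  have := (Real.hasDerivAt_arcsin h₁ h₂).comp x hinner
  refine HasDerivAt.congr_deriv this (Eq.symm ?_)
  have hkey : Real.sqrt (1 - (x * s / (r * Q))^2) = P / (r * Q) := by
    have : 1 - (x * s / (r * Q))^2 = (P / (r*Q))^2 := by
      field_simp
      rw [hs2, hQ2, hP2]
      ring
    rw [this, Real.sqrt_sq (by positivity)]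
  rw [hkey]
  field_simp
  linear_combination x^2 * hQ2

-- derivative of x ↦ arcsin(√(r²-x²)/√(1-x²))
lemma deriv1 {r x : ℝ} (hr0 : 0 < r) (hr1 : r < 1) (hx : x ∈ Ioo (-r) r) :
    HasDerivAt (fun x => Real.arcsin (Real.sqrt (r^2-x^2) / Real.sqrt (1-x^2)))
      (-(x * Real.sqrt (1-r^2)) / ((1-x^2) * Real.sqrt (r^2-x^2))) x := by
  obtain ⟨h1, h2⟩ := hx
  have hx2 : x^2 < r^2 := by nlinarith [abs_lt.2 ⟨h1, h2⟩, sq_abs x]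
  have hr2 : r^2 < 1 := by nlinarith
  have hQpos : 0 < 1 - x^2 := by nlinarith
  have hPpos : 0 < r^2 - x^2 := by linarith
  have hs : 0 < 1 - r^2 := by linarith
  set s := Real.sqrt (1-r^2) with hs_def
  set Q := Real.sqrt (1-x^2) with hQ_def
  set P := Real.sqrt (r^2-x^2) with hP_def
  have hsp : 0 < s := Real.sqrt_pos.2 hs
  have hQp : 0 < Q := Real.sqrt_pos.2 hQpos
  have hPp : 0 < P := Real.sqrt_pos.2 hPpos
  have hs2 : s^2 = 1 - r^2 := Real.sq_sqrt hs.le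
  have hQ2 : Q^2 = 1 - x^2 := Real.sq_sqrt hQpos.le
  have hP2 : P^2 = r^2 - x^2 := Real.sq_sqrt hPpos.le
  have hQd : HasDerivAt (fun x => Real.sqrt (1 - x^2)) (-x / Q) x := by
    have := (Real.hasDerivAt_sqrt (x := 1 - x^2) hQpos.ne').comp x
      (((hasDerivAt_id x).pow 2).const_sub 1)
    refine HasDerivAt.congr_deriv this (Eq.symm ?_)
    field_simp
    rw [← hQ_def]; simp only [id]
    ring
  have hPd : HasDerivAt (fun x => Real.sqrt (r^2 - x^2)) (-x / P) x := by
    have := (Real.hasDerivAt_sqrt (x := r^2 - x^2) hPpos.ne').comp x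
      (((hasDerivAt_id x).pow 2).const_sub (r^2))
    refine HasDerivAt.congr_deriv this (Eq.symm ?_)
    field_simp
    simp only [id, Nat.cast_ofNat, Nat.reduceSub, pow_one]
    ring
  have hinner : HasDerivAt (fun x => Real.sqrt (r^2-x^2) / Real.sqrt (1-x^2))
      (((-x/P) * Q - P * (-x/Q))/Q^2) x := hPd.div hQd hQp.ne'
  have harg : (P / Q)^2 < 1 := by
    rw [div_pow, div_lt_one (by positivity), hQ2, hP2]; linarith
  have h₁ : P / Q ≠ -1 := by intro h; rw [h] at harg; norm_num at harg
  have h₂ : P / Q ≠ 1 := by intro h; rw [h] at harg; norm_num at harg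
  have := (Real.hasDerivAt_arcsin h₁ h₂).comp x hinner
  refine HasDerivAt.congr_deriv this (Eq.symm ?_)
  have hkey : Real.sqrt (1 - (P / Q)^2) = s / Q := by
    have : 1 - (P / Q)^2 = (s / Q)^2 := by
      field_simp
      rw [hs2, hQ2, hP2]; ring
    rw [this, Real.sqrt_sq (by positivity)]
  rw [hkey]
  field_simp
  linear_combination (-x*Q^2)*hs2 + (-x*Q^2)*hP2 + (x*P^2)*hQ2

-- derivative of x ↦ arcsin(x/r)
lemma deriv2 {r x : ℝ} (hr0 : 0 < r) (hr1 : r < 1) (hx : x ∈ Ioo (-r) r) :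
    HasDerivAt (fun x => Real.arcsin (x / r)) (1 / Real.sqrt (r^2-x^2)) x := by
  obtain ⟨h1, h2⟩ := hx
  have hx2 : x^2 < r^2 := by nlinarith [abs_lt.2 ⟨h1, h2⟩, sq_abs x]
  have hPpos : 0 < r^2 - x^2 := by linarith
  have hPp : 0 < Real.sqrt (r^2-x^2) := Real.sqrt_pos.2 hPpos
  have hinner : HasDerivAt (fun x : ℝ => x / r) (1/r) x := by
    simpa using (hasDerivAt_id x).div_const r
  have harg : (x / r)^2 < 1 := by
    rw [div_pow, div_lt_one (by positivity)]; linarith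
  have h₁ : x / r ≠ -1 := by intro h; rw [h] at harg; norm_num at harg
  have h₂ : x / r ≠ 1 := by intro h; rw [h] at harg; norm_num at harg
  have := (Real.hasDerivAt_arcsin h₁ h₂).comp x hinner
  refine HasDerivAt.congr_deriv this (Eq.symm ?_)
  have hkey : Real.sqrt (1 - (x / r)^2) = Real.sqrt (r^2-x^2) / r := by
    rw [show 1 - (x/r)^2 = (r^2-x^2)/r^2 by field_simp, Real.sqrt_div hPpos.le,
      Real.sqrt_sq hr0.le]
  rw [hkey]
  field_simp

lemma core_integral (r L : ℝ) (hr0 : 0 < r) (hr1 : r < 1) :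
    ∫ x in (-r)..r, Real.sqrt (1-r^2) * (x - L*x^2) / (π * (1-x^2) * Real.sqrt (r^2-x^2))
      = -(1 - Real.sqrt (1-r^2)) * L := by
  have hab : -r ≤ r := by linarith
  have hs : 0 < 1 - r^2 := by nlinarith
  set s := Real.sqrt (1-r^2) with hs_def
  have hsp : 0 < s := Real.sqrt_pos.2 hs
  have hπ : (0:ℝ) < π := Real.pi_pos
  set h : ℝ → ℝ := fun x => s * (x - L*x^2) / (π * (1-x^2) * Real.sqrt (r^2-x^2)) with hh
  set H : ℝ → ℝ := fun x => -(1/π) * Real.arcsin (Real.sqrt (r^2-x^2) / Real.sqrt (1-x^2))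
      + (L*s/π) * Real.arcsin (x/r) + (-(L/π)) * Real.arcsin (x*s/(r*Real.sqrt (1-x^2))) with hH
  have hQpos : ∀ x ∈ Icc (-r) r, 0 < 1 - x^2 := by
    intro x hx
    have h1 := hx.1; have h2 := hx.2
    nlinarith
  -- continuity of H on Icc
  have c1 : ContinuousOn (fun x => Real.sqrt (r^2-x^2) / Real.sqrt (1-x^2)) (Icc (-r) r) := by
    apply ContinuousOn.div (by fun_prop) (by fun_prop)
    intro x hx
    have := hQpos x hx
    positivity
  have c3 : ContinuousOn (fun x => x*s/(r*Real.sqrt (1-x^2))) (Icc (-r) r) := by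
    apply ContinuousOn.div (by fun_prop) (by fun_prop)
    intro x hx
    have := hQpos x hx
    positivity
  have hHcont : ContinuousOn H (Icc (-r) r) := by
    rw [hH]
    apply ContinuousOn.add
    apply ContinuousOn.add
    · exact continuousOn_const.mul (Real.continuous_arcsin.comp_continuousOn c1)
    · exact continuousOn_const.mul (Real.continuous_arcsin.comp_continuousOn (by fun_prop))
    · exact continuousOn_const.mul (Real.continuous_arcsin.comp_continuousOn c3)
  -- derivative on Ioo
  have hHderiv : ∀ x ∈ Ioo (-r) r, HasDerivAt H (h x) x := by
    intro x hx
    have hQ : 0 < 1 - x^2 := hQpos x (Ioo_subset_Icc_self hx)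
    have hx2 : x^2 < r^2 := by
      obtain ⟨h1, h2⟩ := hx; nlinarith [abs_lt.2 ⟨h1, h2⟩, sq_abs x]
    have hP : 0 < Real.sqrt (r^2-x^2) := Real.sqrt_pos.2 (by linarith)
    have d1 := (deriv1 hr0 hr1 hx).const_mul (-(1/π))
    have d2 := (deriv2 hr0 hr1 hx).const_mul (L*s/π)
    have d3 := (deriv3 hr0 hr1 hx).const_mul (-(L/π))
    have := (d1.add d2).add d3
    rw [hH, hh]
    refine HasDerivAt.congr_deriv this (Eq.symm ?_)
    field_simp
    ring
  -- integrability
  have hgint : IntervalIntegrable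
      (fun x => s / ((1-x^2) * Real.sqrt (r^2-x^2))) MeasureTheory.volume (-r) r := by
    apply intervalIntegral.intervalIntegrable_deriv_of_nonneg
      (g := fun x => Real.arcsin (x*s/(r*Real.sqrt (1-x^2))))
    · rw [uIcc_of_le hab]
      exact Real.continuous_arcsin.comp_continuousOn c3
    · rw [min_eq_left hab, max_eq_right hab]
      intro x hx
      exact deriv3 hr0 hr1 hx
    · rw [min_eq_left hab, max_eq_right hab]
      intro x hx
      have hQ : 0 < 1 - x^2 := hQpos x (Ioo_subset_Icc_self hx)
      positivity
  have hint : IntervalIntegrable h MeasureTheory.volume (-r) r := by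
    rw [intervalIntegrable_iff_integrableOn_Ioo_of_le hab] at hgint ⊢
    apply MeasureTheory.Integrable.mono'
      (g := fun x => ((r + abs L * r^2)/π) * (s / ((1-x^2) * Real.sqrt (r^2-x^2))))
      (hgint.const_mul _)
    · apply ContinuousOn.aestronglyMeasurable ?_ measurableSet_Ioo
      rw [hh]
      apply ContinuousOn.div (by fun_prop) (by fun_prop)
      intro x hx
      have hQ : 0 < 1 - x^2 := hQpos x (Ioo_subset_Icc_self hx)
      have hx2 : x^2 < r^2 := by
        obtain ⟨h1, h2⟩ := hx; nlinarith [abs_lt.2 ⟨h1, h2⟩, sq_abs x]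
      have hP : 0 < Real.sqrt (r^2-x^2) := Real.sqrt_pos.2 (by linarith)
      positivity
    · filter_upwards [MeasureTheory.ae_restrict_mem measurableSet_Ioo] with x hx
      have hQ : 0 < 1 - x^2 := hQpos x (Ioo_subset_Icc_self hx)
      have hxr : |x| < r := abs_lt.2 ⟨hx.1, hx.2⟩
      have hx2 : x^2 < r^2 := by nlinarith [sq_abs x, abs_nonneg x]
      have hP : 0 < Real.sqrt (r^2-x^2) := Real.sqrt_pos.2 (by linarith)
      rw [hh, Real.norm_eq_abs, abs_div,
        abs_of_pos (by positivity : 0 < π * (1-x^2) * Real.sqrt (r^2-x^2))]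
      rw [div_le_iff₀ (by positivity)]
      have hd : |x - L*x^2| ≤ r + abs L * r^2 := by
        calc |x - L*x^2| ≤ |x| + |L*x^2| := abs_sub _ _
          _ ≤ r + abs L * r^2 := by
              rw [abs_mul, abs_of_nonneg (sq_nonneg x)]
              have h2 : abs L * x^2 ≤ abs L * r^2 :=
                mul_le_mul_of_nonneg_left hx2.le (abs_nonneg L)
              linarith
      have hnum : |s * (x - L*x^2)| ≤ s * (r + abs L * r^2) := by
        rw [abs_mul, abs_of_pos hsp]
        exact mul_le_mul_of_nonneg_left hd hsp.le
      calc |s * (x - L*x^2)| ≤ s * (r + abs L * r^2) := hnum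
        _ = (r + abs L * r^2)/π * (s / ((1-x^2) * Real.sqrt (r^2-x^2)))
            * (π * (1-x^2) * Real.sqrt (r^2-x^2)) := by
          field_simp
  -- FTC
  have key : ∫ x in (-r)..r, h x = H r - H (-r) :=
    intervalIntegral.integral_eq_sub_of_hasDerivAt_of_le hab hHcont hHderiv hint
  have goal_eq : (∫ x in (-r)..r,
      Real.sqrt (1-r^2) * (x - L*x^2) / (π * (1-x^2) * Real.sqrt (r^2-x^2)))
      = ∫ x in (-r)..r, h x := by rw [hh]
  rw [goal_eq, key, hH]
  have e1 : Real.sqrt (r^2 - r^2) = 0 := by simp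
  have e2 : Real.sqrt (r^2 - (-r)^2) = 0 := by simp
  have e3 : r / r = 1 := div_self hr0.ne'
  have e4 : (-r) / r = -1 := by rw [neg_div, e3]
  have e5 : r * s / (r * s) = 1 := div_self (by positivity)
  have e6 : (-r) * s / (r * s) = -1 := by rw [neg_mul, neg_div, e5]
  simp only [e1, e2, e3, e4, e5, e6, zero_div, Real.arcsin_zero, Real.arcsin_one,
    Real.arcsin_neg, Real.arcsin_one]
  field_simp
  rw [← hs_def, div_self hsp.ne', Real.arcsin_neg, Real.arcsin_one]
  ring


/-- `λ_{α,β} = |α|² − |β|² + (aα·conj(bβ) + conj(aα)·bβ)/|a|²` (a real number). -/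
def lam (a b α β : ℂ) : ℝ :=
  ‖α‖ ^ 2 - ‖β‖ ^ 2 +
    (a * α * (starRingEnd ℂ) (b * β) + (starRingEnd ℂ) (a * α) * (b * β)).re / ‖a‖ ^ 2

/-- The limit density `f_{α,β}`. -/
def dens (a b α β : ℂ) (x : ℝ) : ℝ :=
  if |x| < ‖a‖ then
    Real.sqrt (1 - ‖a‖ ^ 2) * (1 - lam a b α β * x) /
      (Real.pi * (1 - x ^ 2) * Real.sqrt (‖a‖ ^ 2 - x ^ 2))
  else 0

theorem mean_of_limit_distribution (a b c d α β : ℂ)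
    (h1 : ‖a‖ ^ 2 + ‖c‖ ^ 2 = 1) (h2 : ‖b‖ ^ 2 + ‖d‖ ^ 2 = 1)
    (h3 : a * (starRingEnd ℂ) c + b * (starRingEnd ℂ) d = 0)
    (hφ : ‖α‖ ^ 2 + ‖β‖ ^ 2 = 1) (habcd : a * b * c * d ≠ 0) :
    ∫ x in (-‖a‖)..‖a‖, x * dens a b α β x
      = -(1 - Real.sqrt (1 - ‖a‖ ^ 2)) * lam a b α β := by
  have ha : a ≠ 0 := fun h => habcd (by simp [h])
  have hc : c ≠ 0 := fun h => habcd (by simp [h])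
  have hr0 : 0 < ‖a‖ := norm_pos_iff.2 ha
  have hcpos : 0 < ‖c‖ := norm_pos_iff.2 hc
  have hr1 : ‖a‖ < 1 := by nlinarith [norm_nonneg a, norm_nonneg c]
  have heq : ∀ x : ℝ, x * dens a b α β x
      = Real.sqrt (1-‖a‖^2) * (x - lam a b α β * x^2)
        / (π * (1-x^2) * Real.sqrt (‖a‖^2-x^2)) := by
    intro x
    unfold dens
    split_ifs with hcase
    · have hx2 : x^2 < ‖a‖^2 := by nlinarith [sq_abs x, abs_nonneg x]
      have hQ : 0 < 1 - x^2 := by nlinarith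
      have hP : 0 < Real.sqrt (‖a‖^2-x^2) := Real.sqrt_pos.2 (by linarith)
      have hπ : (0:ℝ) < π := Real.pi_pos
      field_simp
    · have hx2 : ‖a‖^2 - x^2 ≤ 0 := by
        push_neg at hcase
        nlinarith [sq_abs x, abs_nonneg x]
      rw [Real.sqrt_eq_zero_of_nonpos hx2]
      simp
  rw [intervalIntegral.integral_congr (fun x _ => heq x)]
  exact core_integral ‖a‖ (lam a b α β) hr0 hr1
end
end

section
/- Suppose abcd ≠ 0. Then the second moment of the limit distribution is E((Z^φ)²) = ∫_{−|a|}^{|a|} x²·f_{α,β}(x) dx = 1 − √(1−|a|²). -/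
open scoped BigOperators

noncomputable section

namespace SecondMomentAux

lemma sqrtw_deriv {x : ℝ} (hx : x^2 < 1) :
    HasDerivAt (fun y : ℝ => Real.sqrt (1 - y^2)) (-x / Real.sqrt (1 - x^2)) x := by
  have hne : (1:ℝ) - x^2 ≠ 0 := by nlinarith
  have h := (Real.hasDerivAt_sqrt hne).comp x
    ((hasDerivAt_const x (1:ℝ)).sub (hasDerivAt_pow 2 x))
  refine h.congr_deriv ?_
  symm
  have hw : Real.sqrt (1 - x^2) ≠ 0 := Real.sqrt_ne_zero'.2 (by nlinarith)
  field_simp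
  ring

lemma sqrtq_deriv {r x : ℝ} (hx : x^2 < r^2) :
    HasDerivAt (fun y : ℝ => Real.sqrt (r^2 - y^2)) (-x / Real.sqrt (r^2 - x^2)) x := by
  have hne : r^2 - x^2 ≠ 0 := by nlinarith
  have h := (Real.hasDerivAt_sqrt hne).comp x
    ((hasDerivAt_const x (r^2:ℝ)).sub (hasDerivAt_pow 2 x))
  refine h.congr_deriv ?_
  symm
  have hw : Real.sqrt (r^2 - x^2) ≠ 0 := Real.sqrt_ne_zero'.2 (by nlinarith)
  field_simp
  ring

lemma deriv1 {r s x : ℝ} (hr0 : 0 < r) (hr1 : r < 1) (hs : s = Real.sqrt (1 - r^2))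
    (hx : x^2 < r^2) :
    HasDerivAt (fun y : ℝ => Real.arcsin (y * s / (r * Real.sqrt (1 - y^2))))
      (s / ((1 - x^2) * Real.sqrt (r^2 - x^2))) x := by
  have hx1 : x^2 < 1 := lt_trans hx (by nlinarith)
  have hw0 : 0 < Real.sqrt (1 - x^2) := Real.sqrt_pos.2 (by nlinarith)
  have hw2 : Real.sqrt (1 - x^2) ^ 2 = 1 - x^2 := Real.sq_sqrt (by nlinarith)
  have hq0 : 0 < Real.sqrt (r^2 - x^2) := Real.sqrt_pos.2 (by nlinarith)
  have hq2 : Real.sqrt (r^2 - x^2) ^ 2 = r^2 - x^2 := Real.sq_sqrt (by nlinarith)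
  have hs0 : 0 < s := hs ▸ Real.sqrt_pos.2 (by nlinarith)
  have hs2 : s^2 = 1 - r^2 := by rw [hs]; exact Real.sq_sqrt (by nlinarith)
  set w := Real.sqrt (1 - x^2)
  set q := Real.sqrt (r^2 - x^2)
  have hu : HasDerivAt (fun y : ℝ => y * s / (r * Real.sqrt (1 - y^2)))
      ((s * (r * w) - x * s * (r * (-x / w))) / (r * w)^2) x := by
    have hc : HasDerivAt (fun y : ℝ => y * s) s x := by
      simpa using (hasDerivAt_id x).mul_const s
    have hd : HasDerivAt (fun y : ℝ => r * Real.sqrt (1 - y^2)) (r * (-x / w)) x :=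
      (sqrtw_deriv hx1).const_mul r
    exact hc.div hd (by positivity)
  have huval : |x * s / (r * w)| < 1 := by
    rw [abs_div, abs_of_pos (by positivity : (0:ℝ) < r * w), div_lt_one (by positivity)]
    rw [abs_mul, abs_of_pos hs0]
    nlinarith [abs_nonneg x, sq_abs x, mul_pos hr0 hw0, abs_nonneg x]
  have h1 : x * s / (r * w) ≠ -1 := by
    intro h; rw [h] at huval; simp at huval
  have h2 : x * s / (r * w) ≠ 1 := by
    intro h; rw [h] at huval; simp at huval
  have harc := (Real.hasDerivAt_arcsin h1 h2).comp x hu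
  have hkey : Real.sqrt (1 - (x * s / (r * w))^2) = q / (r * w) := by
    have : 1 - (x * s / (r * w))^2 = (q / (r * w))^2 := by
      field_simp
      nlinarith
    rw [this, Real.sqrt_sq (by positivity)]
  refine harc.congr_deriv ?_
  symm
  rw [hkey]
  have hne1 : (1:ℝ) - x^2 ≠ 0 := by nlinarith
  field_simp
  linear_combination (x^2) * hw2

lemma deriv2 {r x : ℝ} (hr0 : 0 < r) (hx : x^2 < r^2) :
    HasDerivAt (fun y : ℝ => Real.arcsin (y / r)) (1 / Real.sqrt (r^2 - x^2)) x := by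
  have hq0 : 0 < Real.sqrt (r^2 - x^2) := Real.sqrt_pos.2 (by nlinarith)
  have hq2 : Real.sqrt (r^2 - x^2) ^ 2 = r^2 - x^2 := Real.sq_sqrt (by nlinarith)
  have huval : |x / r| < 1 := by
    rw [abs_div, abs_of_pos hr0, div_lt_one hr0]
    nlinarith [abs_nonneg x, sq_abs x]
  have h1 : x / r ≠ -1 := by intro h; rw [h] at huval; simp at huval
  have h2 : x / r ≠ 1 := by intro h; rw [h] at huval; simp at huval
  have hu : HasDerivAt (fun y : ℝ => y / r) (1 / r) x := by
    simpa using (hasDerivAt_id x).div_const r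
  have harc := (Real.hasDerivAt_arcsin h1 h2).comp x hu
  have hkey : Real.sqrt (1 - (x / r)^2) = Real.sqrt (r^2 - x^2) / r := by
    have : 1 - (x / r)^2 = (Real.sqrt (r^2 - x^2) / r)^2 := by
      field_simp
      nlinarith
    rw [this, Real.sqrt_sq (by positivity)]
  refine harc.congr_deriv ?_
  symm
  rw [hkey]
  field_simp

lemma deriv4 {r s x : ℝ} (hr0 : 0 < r) (hr1 : r < 1) (hs : s = Real.sqrt (1 - r^2))
    (hx : x^2 < r^2) :
    HasDerivAt (fun y : ℝ => Real.arctan (Real.sqrt (r^2 - y^2) / s))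
      (-x * s / (Real.sqrt (r^2 - x^2) * (1 - x^2))) x := by
  have hx1 : x^2 < 1 := lt_trans hx (by nlinarith)
  have hq0 : 0 < Real.sqrt (r^2 - x^2) := Real.sqrt_pos.2 (by nlinarith)
  have hq2 : Real.sqrt (r^2 - x^2) ^ 2 = r^2 - x^2 := Real.sq_sqrt (by nlinarith)
  have hs0 : 0 < s := hs ▸ Real.sqrt_pos.2 (by nlinarith)
  have hs2 : s^2 = 1 - r^2 := by rw [hs]; exact Real.sq_sqrt (by nlinarith)
  set q := Real.sqrt (r^2 - x^2)
  have hu : HasDerivAt (fun y : ℝ => Real.sqrt (r^2 - y^2) / s) (-x / q / s) x :=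
    (sqrtq_deriv hx).div_const s
  have harc := (Real.hasDerivAt_arctan (q / s)).comp x hu
  have hne1 : (1:ℝ) - x^2 ≠ 0 := by nlinarith
  have h15 : 1 + (q / s)^2 = (1 - x^2) / s^2 := by
    field_simp
    linear_combination hq2 + hs2
  rw [h15] at harc
  refine harc.congr_deriv ?_
  symm
  field_simp

set_option maxHeartbeats 1000000 in
lemma aux_integral (r L : ℝ) (hr0 : 0 < r) (hr1 : r < 1) :
    ∫ x in (-r)..r, x ^ 2 *
      (if |x| < r then Real.sqrt (1 - r^2) * (1 - L * x) /
        (Real.pi * (1 - x^2) * Real.sqrt (r^2 - x^2)) else 0)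
      = 1 - Real.sqrt (1 - r^2) := by
  have hpi : (0:ℝ) < Real.pi := Real.pi_pos
  set s := Real.sqrt (1 - r^2) with hsdef
  have hs0 : 0 < s := Real.sqrt_pos.2 (by nlinarith)
  have hs2 : s^2 = 1 - r^2 := Real.sq_sqrt (by nlinarith)
  set F : ℝ → ℝ := fun x => s / Real.pi *
      (s⁻¹ * Real.arcsin (x * s / (r * Real.sqrt (1 - x^2))) - Real.arcsin (x / r) -
        L * (Real.sqrt (r^2 - x^2) - s⁻¹ * Real.arctan (Real.sqrt (r^2 - x^2) / s)))
    with hF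
  have hderiv : ∀ x ∈ Set.Ioo (-r) r, HasDerivAt F
      (x ^ 2 * (if |x| < r then s * (1 - L * x) /
        (Real.pi * (1 - x^2) * Real.sqrt (r^2 - x^2)) else 0)) x := by
    intro x hx
    have hxr : |x| < r := abs_lt.2 ⟨hx.1, hx.2⟩
    have hx2 : x^2 < r^2 := by nlinarith [sq_abs x, abs_nonneg x, hx.1, hx.2]
    have hx1 : x^2 < 1 := lt_trans hx2 (by nlinarith)
    have hq0 : 0 < Real.sqrt (r^2 - x^2) := Real.sqrt_pos.2 (by nlinarith)
    have hne1 : (1:ℝ) - x^2 ≠ 0 := by nlinarith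
    have H := ((((deriv1 hr0 hr1 hsdef hx2).const_mul s⁻¹).sub (deriv2 hr0 hx2)).sub
      (((sqrtq_deriv hx2).sub ((deriv4 hr0 hr1 hsdef hx2).const_mul s⁻¹)).const_mul L)).const_mul
      (s / Real.pi)
    rw [if_pos hxr]
    refine H.congr_deriv ?_
    symm
    field_simp
    ring
  have hcont : ContinuousOn F (Set.Icc (-r) r) := by
    apply ContinuousOn.mul continuousOn_const
    apply ContinuousOn.sub (ContinuousOn.sub ?_ ?_) ?_
    · apply ContinuousOn.mul continuousOn_const
      apply Real.continuous_arcsin.comp_continuousOn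
      apply ContinuousOn.div
      · exact (continuous_id.mul continuous_const).continuousOn
      · exact (continuous_const.mul (Real.continuous_sqrt.comp
          (continuous_const.sub (continuous_pow 2)))).continuousOn
      · intro x hx
        have hx1 : x^2 < 1 := by
          rcases hx with ⟨h1, h2⟩
          nlinarith
        have : 0 < Real.sqrt (1 - x^2) := Real.sqrt_pos.2 (by nlinarith)
        positivity
    · exact (Real.continuous_arcsin.comp (continuous_id.div_const r)).continuousOn
    · apply ContinuousOn.mul continuousOn_const
      apply ContinuousOn.sub
      · exact (Real.continuous_sqrt.comp
          (continuous_const.sub (continuous_pow 2))).continuousOn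
      · exact (continuous_const.mul (Real.continuous_arctan.comp
          ((Real.continuous_sqrt.comp
            (continuous_const.sub (continuous_pow 2))).div_const s))).continuousOn
  have hint : IntervalIntegrable (fun x => x ^ 2 * (if |x| < r then s * (1 - L * x) /
      (Real.pi * (1 - x^2) * Real.sqrt (r^2 - x^2)) else 0)) MeasureTheory.volume (-r) r := by
    set M : ℝ := (1 + |L| * r) / (Real.pi * s) with hM
    have hM0 : 0 ≤ M := by positivity
    have hphi : IntervalIntegrable (fun x => M / Real.sqrt (r^2 - x^2))
        MeasureTheory.volume (-r) r := by
      rw [intervalIntegrable_iff_integrableOn_Ioc_of_le (by linarith)]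
      apply intervalIntegral.integrableOn_deriv_of_nonneg
        (g := fun x => M * Real.arcsin (x / r))
      · exact (continuous_const.mul (Real.continuous_arcsin.comp
          (continuous_id.div_const r))).continuousOn
      · intro x hx
        have hxr : |x| < r := abs_lt.2 ⟨hx.1, hx.2⟩
        have hx2 : x^2 < r^2 := by nlinarith [sq_abs x, abs_nonneg x]
        have := (deriv2 hr0 hx2).const_mul M
        refine this.congr_deriv ?_
        symm
        rw [mul_one_div]
      · intro x _
        positivity
    apply hphi.mono_fun'
    · apply Measurable.aestronglyMeasurable
      refine ((continuous_pow 2).measurable).mul ?_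
      refine Measurable.ite (measurableSet_lt continuous_abs.measurable measurable_const)
        ?_ measurable_const
      exact ((continuous_const.mul (continuous_const.sub
          (continuous_const.mul continuous_id))).measurable).div
        (((continuous_const.mul (continuous_const.sub (continuous_pow 2))).mul
          (Real.continuous_sqrt.comp (continuous_const.sub (continuous_pow 2)))).measurable)
    · apply Filter.Eventually.of_forall
      intro x
      by_cases h : |x| < r
      · have hx2 : x^2 < r^2 := by nlinarith [sq_abs x, abs_nonneg x]
        have hx1 : x^2 < 1 := lt_trans hx2 (by nlinarith)
        have hq0 : 0 < Real.sqrt (r^2 - x^2) := Real.sqrt_pos.2 (by nlinarith)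
        have hw1 : (0:ℝ) < 1 - x^2 := by nlinarith
        have hLx : |1 - L * x| ≤ 1 + |L| * r := by
          calc |1 - L * x| = |1 + (-(L * x))| := by ring_nf
          _ ≤ |(1:ℝ)| + |(-(L * x))| := abs_add_le _ _
          _ = 1 + |L| * |x| := by rw [abs_one, abs_neg, abs_mul]
          _ ≤ 1 + |L| * r := by nlinarith [abs_nonneg L, abs_nonneg x, h.le]
        simp only [if_pos h, Real.norm_eq_abs]
        rw [abs_mul, abs_of_nonneg (sq_nonneg x), abs_div, abs_mul, abs_of_pos hs0,
          abs_of_pos (by positivity : (0:ℝ) < Real.pi * (1 - x^2) * Real.sqrt (r^2 - x^2)),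
          hM]
        rw [div_div, mul_div_assoc', div_le_div_iff₀ (by positivity) (by positivity)]
        have hss : s^2 ≤ 1 - x^2 := by nlinarith
        have key : x^2 * s^2 * |1 - L * x| ≤ (1 - x^2) * (1 + |L| * r) := by
          have e1 : x^2 * s^2 ≤ 1 - x^2 := by nlinarith [sq_nonneg s, sq_nonneg x]
          exact mul_le_mul e1 hLx (abs_nonneg _) (by linarith)
        nlinarith [mul_le_mul_of_nonneg_right key (mul_nonneg hpi.le hq0.le)]
      · simp only [if_neg h, mul_zero, norm_zero]
        positivity
  rw [intervalIntegral.integral_eq_sub_of_hasDerivAt_of_le (by linarith) hcont hderiv hint]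
  have e0 : Real.sqrt (r^2 - r^2) = 0 := by rw [sub_self, Real.sqrt_zero]
  have e0' : Real.sqrt (r^2 - (-r)^2) = 0 := by rw [neg_sq, sub_self, Real.sqrt_zero]
  have e1 : r * s / (r * Real.sqrt (1 - r^2)) = 1 := by
    rw [← hsdef]; exact div_self (by positivity)
  have e2 : (-r) * s / (r * Real.sqrt (1 - (-r)^2)) = -1 := by
    rw [neg_sq, ← hsdef, neg_mul, neg_div]
    rw [div_self (by positivity : r * s ≠ 0)]
  have e3 : r / r = 1 := div_self hr0.ne'
  have e4 : (-r) / r = -1 := by rw [neg_div, e3]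
  rw [hF]
  simp only [e0, e0', e1, e2, e3, e4, Real.arcsin_one, Real.arcsin_neg_one, zero_div,
    Real.arctan_zero, mul_zero, sub_zero, zero_sub]
  field_simp
  ring

end SecondMomentAux

theorem second_moment_of_limit_distribution (a b c d α β : ℂ)
    (h1 : ‖a‖ ^ 2 + ‖c‖ ^ 2 = 1) (h2 : ‖b‖ ^ 2 + ‖d‖ ^ 2 = 1)
    (h3 : a * (starRingEnd ℂ) c + b * (starRingEnd ℂ) d = 0)
    (hφ : ‖α‖ ^ 2 + ‖β‖ ^ 2 = 1) (habcd : a * b * c * d ≠ 0) :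
    ∫ x in (-‖a‖)..‖a‖, x ^ 2 * dens a b α β x = 1 - Real.sqrt (1 - ‖a‖ ^ 2) := by
  have ha : a ≠ 0 := fun h => habcd (by simp [h])
  have hc : c ≠ 0 := fun h => habcd (by simp [h])
  have hr0 : 0 < ‖a‖ := norm_pos_iff.2 ha
  have hc0 : 0 < ‖c‖ := norm_pos_iff.2 hc
  have hr1 : ‖a‖ < 1 := by nlinarith
  have := SecondMomentAux.aux_integral ‖a‖ (lam a b α β) hr0 hr1
  simpa [dens] using this
end
end
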